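/- The only proper patterns P of even length n with μ(P) = 0 are (up to cyclic shift) P₁, with first row alternating 1,0,1,0,… and second row all 1s, and P₂, with first row all 0s and second row alternating 1,0,1,0,…. -/
import Mathlib


open scoped Classical

noncomputable section

/-- A pattern of length `n`: a `2 × n` matrix over `{0,1}` with columns indexed cyclically
by `ZMod n`, such that a `1` in the first row always has a `1` below it in the second row. -/
structure Pattern (n : ℕ) where
  row1 : ZMod n → Bool
  row2 : ZMod n → Bool
  le : ∀ i, row1 i = true → row2 i = true

namespace Pattern

/-- `i` starts a block of the cyclic row `r`: a maximal group of at least three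
consecutive `1`s bounded by `0`s begins at position `i`. -/
def BlockStart {n : ℕ} (r : ZMod n → Bool) (i : ZMod n) : Prop :=
  r (i - 1) = false ∧ r i = true ∧ r (i + 1) = true ∧ r (i + 2) = true

/-- The number of blocks (maximal groups of at least three consecutive `1`s bounded by
`0`s) of the cyclic row `r`. -/
def numBlocks {n : ℕ} [NeZero n] (r : ZMod n → Bool) : ℕ :=
  (Finset.univ.filter fun i : ZMod n => BlockStart r i).card

/-- A singleton of the row `r` at position `i`: a `1` with a `0` on either side. -/
def SingletonAt {n : ℕ} (r : ZMod n → Bool) (i : ZMod n) : Prop :=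
  r (i - 1) = false ∧ r i = true ∧ r (i + 1) = false

/-- The block of `r` starting at `i` has length exactly `l ≥ 3`. -/
def BlockAt {n : ℕ} (r : ZMod n → Bool) (i : ZMod n) (l : ℕ) : Prop :=
  3 ≤ l ∧ r (i - 1) = false ∧ r (i + (l : ZMod n)) = false ∧
    ∀ k < l, r (i + (k : ZMod n)) = true

/-- The cyclic row `r` is a run: it consists of blocks and singletons separated by single
`0`s (no two consecutive `0`s, and no maximal group of exactly two `1`s). -/
def IsRun {n : ℕ} (r : ZMod n → Bool) : Prop :=
  (∃ i, r i = true) ∧ (∃ i, r i = false) ∧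
  (∀ i, r i = true ∨ r (i + 1) = true) ∧
  (∀ i, ¬ (r (i - 1) = false ∧ r i = true ∧ r (i + 1) = true ∧ r (i + 2) = false))

/-- A nice run: a run all of whose blocks have length exactly 3. -/
def IsNiceRun {n : ℕ} (r : ZMod n → Bool) : Prop :=
  IsRun r ∧ ∀ i, BlockStart r i → r (i + 3) = false

/-- The part of the row `r` above the positions `i, i+1, …, i+l-1` (a block of the other
row of length `l ≥ 4`) is a nice run subject to the boundary conditions: the outermost
group of `1`s on the left is either a block (of length 3) starting exactly above the 3rd
position, or a singleton above the 2nd or 3rd position; symmetrically on the right. -/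
def NiceRunOn {n : ℕ} (r : ZMod n → Bool) (i : ZMod n) (l : ℕ) : Prop :=
  (∃ a : ℕ, a < l ∧ r (i + (a : ZMod n)) = true) ∧
  r i = false ∧ r (i + ((l - 1 : ℕ) : ZMod n)) = false ∧
  (r (i + 1) = true ∨ r (i + 2) = true) ∧
  (r (i + 1) = true → r (i + 2) = false) ∧
  (r (i + ((l - 2 : ℕ) : ZMod n)) = true ∨ r (i + ((l - 3 : ℕ) : ZMod n)) = true) ∧
  (r (i + ((l - 2 : ℕ) : ZMod n)) = true → r (i + ((l - 3 : ℕ) : ZMod n)) = false) ∧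
  (∀ k : ℕ, k + 1 < l → r (i + (k : ZMod n)) = false →
    r (i + ((k + 1 : ℕ) : ZMod n)) = false →
    (∀ m : ℕ, m < l → r (i + (m : ZMod n)) = true → m < k) ∨
    (∀ m : ℕ, m < l → r (i + (m : ZMod n)) = true → k + 1 < m)) ∧
  (∀ k : ℕ, k + 3 ≤ l → (k = 0 ∨ r (i + ((k - 1 : ℕ) : ZMod n)) = false) →
    r (i + (k : ZMod n)) = true → r (i + ((k + 1 : ℕ) : ZMod n)) = true →
    (r (i + ((k + 2 : ℕ) : ZMod n)) = true ∧
      (k + 3 = l ∨ r (i + ((k + 3 : ℕ) : ZMod n)) = false)))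

/-- A proper pattern. -/
def Proper {n : ℕ} (P : Pattern n) : Prop :=
  (IsRun P.row2 ∨ ∀ i, P.row2 i = true) ∧
  ((∀ i, P.row2 i = true) → IsNiceRun P.row1) ∧
  (∀ i, SingletonAt P.row2 i → P.row1 i = false) ∧
  (∀ i, BlockAt P.row2 i 3 → ∀ k : ℕ, k < 3 → P.row1 (i + (k : ZMod n)) = false) ∧
  (∀ i, ∀ l : ℕ, 4 ≤ l → BlockAt P.row2 i l → NiceRunOn P.row1 i l)

/-- The `μ`-invariant of a proper pattern: the number of blocks in the first row plus the
number of blocks in the second row. -/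
def mu {n : ℕ} [NeZero n] (P : Pattern n) : ℕ :=
  numBlocks P.row1 + numBlocks P.row2

end Pattern

lemma alt_step {n : ℕ} [NeZero n] (r : ZMod n → Bool)
    (hf : ∃ i, r i = false)
    (h3 : ∀ i, r i = true ∨ r (i + 1) = true)
    (h4 : ∀ i, ¬ (r (i - 1) = false ∧ r i = true ∧ r (i + 1) = true ∧ r (i + 2) = false))
    (hb : ∀ i, ¬ Pattern.BlockStart r i) :
    ∀ i, r (i + 1) = !r i := by
  intro i
  cases hri : r i with
  | false =>
      rcases h3 i with h | h
      · rw [hri] at h; exact absurd h (by simp)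
      · simp [h]
  | true =>
      simp only [Bool.not_true]
      by_contra hcon
      have h1 : r (i + 1) = true := by
        cases h' : r (i + 1) <;> simp_all
      obtain ⟨k, hk⟩ := hf
      have hex : ∃ m : ℕ, r (i - (m : ZMod n)) = false := by
        refine ⟨(i - k).val, ?_⟩
        rwa [ZMod.natCast_val, ZMod.cast_id, sub_sub_cancel]
      set m := Nat.find hex with hm
      have hmf : r (i - (m : ZMod n)) = false := Nat.find_spec hex
      have hm0 : m ≠ 0 := by
        intro h0
        rw [h0] at hmf
        simp only [Nat.cast_zero, sub_zero] at hmf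
        rw [hri] at hmf; exact absurd hmf (by simp)
      set j : ZMod n := i - (m : ZMod n) + 1 with hj
      have hj1 : r (j - 1) = false := by
        rw [hj, add_sub_cancel_right]; exact hmf
      have hj2 : r j = true := by
        have hlt : m - 1 < m := by omega
        have := Nat.find_min hex hlt
        have e1 : i - ((m - 1 : ℕ) : ZMod n) = j := by
          rw [Nat.cast_sub (by omega : 1 ≤ m)]
          rw [hj]; push_cast; ring
        rw [e1] at this
        cases h' : r j
        · exact absurd h' this
        · rfl
      have hj3 : r (j + 1) = true := by
        rcases Nat.lt_or_ge m 2 with hm2 | hm2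
        · have hm1 : m = 1 := by omega
          have ej : j + 1 = i + 1 := by
            rw [hj, hm1]; push_cast; ring
          rw [ej]; exact h1
        · have hlt : m - 2 < m := by omega
          have := Nat.find_min hex hlt
          have e1 : i - ((m - 2 : ℕ) : ZMod n) = j + 1 := by
            rw [Nat.cast_sub (by omega : 2 ≤ m)]
            rw [hj]; push_cast; ring
          rw [e1] at this
          cases h' : r (j + 1)
          · exact absurd h' this
          · rfl
      have hj4 : r (j + 2) = true := by
        have := h4 j
        cases h' : r (j + 2)
        · exact absurd ⟨hj1, hj2, hj3, h'⟩ this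
        · rfl
      exact hb j ⟨hj1, hj2, hj3, hj4⟩

lemma alt_decide {n : ℕ} [NeZero n] (r : ZMod n → Bool)
    (halt : ∀ i, r (i + 1) = !r i) (c : ZMod n) (hc : r c = true) :
    ∀ j, r j = decide ((j - c).val % 2 = 0) := by
  have key : ∀ k : ℕ, r (c + (k : ZMod n)) = decide (k % 2 = 0) := by
    intro k
    induction k with
    | zero => simpa using hc
    | succ k ih =>
        have e : c + ((k + 1 : ℕ) : ZMod n) = (c + (k : ZMod n)) + 1 := by
          push_cast; ring
        rw [e, halt, ih]
        rcases Nat.mod_two_eq_zero_or_one k with h | h <;> simp [Nat.add_mod, h]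
  intro j
  have := key (j - c).val
  rw [ZMod.natCast_val, ZMod.cast_id] at this
  rwa [show c + (j - c) = j from by ring] at this

/-- The only proper patterns `P` of even length `n` with `μ(P) = 0` are, up to cyclic
shift, the pattern `P₁` with alternating first row `1,0,1,0,…` and all-ones second row,
and the pattern `P₂` with all-zero first row and alternating second row `1,0,1,0,…`. -/
theorem stmt_15 (n : ℕ) [NeZero n] (hn : Even n) (P : Pattern n) (hP : P.Proper)
    (h0 : P.mu = 0) :
    (∃ c : ZMod n, (∀ j, P.row1 j = decide ((j - c).val % 2 = 0)) ∧
      (∀ j, P.row2 j = true)) ∨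
    (∃ c : ZMod n, (∀ j, P.row1 j = false) ∧
      (∀ j, P.row2 j = decide ((j - c).val % 2 = 0))) := by
  have hmu : Pattern.numBlocks P.row1 = 0 ∧ Pattern.numBlocks P.row2 = 0 := by
    have := h0; unfold Pattern.mu at this; omega
  have hbgen : ∀ r : ZMod n → Bool, Pattern.numBlocks r = 0 →
      ∀ i, ¬ Pattern.BlockStart r i := by
    intro r hr i hi
    have h1 : i ∈ Finset.univ.filter (fun i : ZMod n => Pattern.BlockStart r i) := by
      simp [hi]
    rw [Pattern.numBlocks, Finset.card_eq_zero] at hr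
    rw [hr] at h1
    exact absurd h1 (Finset.notMem_empty i)
  have hb1 := hbgen P.row1 hmu.1
  have hb2 := hbgen P.row2 hmu.2
  obtain ⟨hrun, hall, hsing, _, _⟩ := hP
  rcases hrun with hrun | hall2
  · -- row2 is a run: right disjunct
    obtain ⟨⟨c, hc⟩, hf, h3, h4⟩ := hrun
    have halt := alt_step P.row2 hf h3 h4 hb2
    right
    refine ⟨c, ?_, alt_decide P.row2 halt c hc⟩
    intro j
    by_contra hj
    have hj' : P.row1 j = true := by cases h' : P.row1 j <;> simp_all
    have h2j : P.row2 j = true := P.le j hj'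
    have hs : Pattern.SingletonAt P.row2 j := by
      refine ⟨?_, h2j, ?_⟩
      · have hstep := halt (j - 1)
        rw [sub_add_cancel, h2j] at hstep
        cases h' : P.row2 (j - 1)
        · rfl
        · rw [h'] at hstep; exact absurd hstep (by simp)
      · rw [halt j, h2j]; rfl
    exact hj (hsing j hs)
  · -- row2 all ones: left disjunct
    obtain ⟨⟨⟨c, hc⟩, hf, h3, h4⟩, _⟩ := hall hall2
    have halt := alt_step P.row1 hf h3 h4 hb1
    exact Or.inl ⟨c, alt_decide P.row1 halt c hc, hall2⟩
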